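/- arXiv:1711.09765 — 2 statements merged into one kernel-verified Lean document; each statement's English description precedes it below -/
import Mathlib

section
/- Fix n ≥ 2 and define the 2^n × 2^n complex matrix S_n := fromBlocks (I_{2^{n-2}} ⊗ P₀) (I_{2^{n-2}} ⊗ L₁) (I_{2^{n-2}} ⊗ L₀) (I_{2^{n-2}} ⊗ P₁), where the Kronecker factors I_{2^{n-2}} are identity matrices of size 2^{n-2}. Then for all x₁, xₙ ∈ ℂ² and all w ∈ ℂ^{2^{n-2}}, S_n applied to the Kronecker product x₁ ⊗ w ⊗ xₙ equals xₙ ⊗ w ⊗ x₁. -/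
open Matrix Kronecker

noncomputable def P0 : Matrix (Fin 2) (Fin 2) ℂ := Matrix.single 0 0 1
noncomputable def P1 : Matrix (Fin 2) (Fin 2) ℂ := Matrix.single 1 1 1
noncomputable def L0 : Matrix (Fin 2) (Fin 2) ℂ := Matrix.single 0 1 1
noncomputable def L1 : Matrix (Fin 2) (Fin 2) ℂ := Matrix.single 1 0 1

/-- Kronecker product of vectors: `(x ⊗ y)_{(i,j)} = x i * y j`. -/
def vecKron {α β : Type*} (x : α → ℂ) (y : β → ℂ) : α × β → ℂ := fun p => x p.1 * y p.2

/-- The canonical identification of `Fin 2 × α` with `α ⊕ α` (splitting according to the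
first qubit). -/
def qSplit {α : Type*} (p : Fin 2 × α) : α ⊕ α :=
  if p.1 = 0 then Sum.inl p.2 else Sum.inr p.2

def Equiv.outerSwap (α β : Type*) : Equiv.Perm (α × β × α) where
  toFun p := (p.2.2, p.2.1, p.1)
  invFun p := (p.2.2, p.2.1, p.1)

theorem vecKron_comp_outerSwap {α β : Type*} (x y : α → ℂ) (w : β → ℂ) :
    vecKron x (vecKron w y) ∘ Equiv.outerSwap α β = vecKron y (vecKron w x) := by
  funext ⟨a, i, b⟩
  simp only [Function.comp_apply, Equiv.outerSwap, Equiv.coe_fn_mk, vecKron]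
  ring

-- Block `(a, a')` is `1 ⊗ₖ single a' a 1`, so the entry at `((a, i, b), (a', i', b'))` is
-- `δ i i' * δ a b' * δ b a'`.
theorem fromBlocks_kron_submatrix_qSplit_eq_permMatrix {α : Type*} [DecidableEq α] :
    (fromBlocks ((1 : Matrix α α ℂ) ⊗ₖ P0) ((1 : Matrix α α ℂ) ⊗ₖ L1)
        ((1 : Matrix α α ℂ) ⊗ₖ L0) ((1 : Matrix α α ℂ) ⊗ₖ P1)).submatrix qSplit qSplit =
      (Equiv.outerSwap (Fin 2) α).permMatrix ℂ := by
  ext ⟨a, i, b⟩ ⟨a', i', b'⟩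
  fin_cases a <;> fin_cases a' <;> fin_cases b <;> fin_cases b' <;>
    simp [qSplit, P0, P1, L0, L1, PEquiv.toMatrix_apply, Equiv.outerSwap, one_apply, Matrix.single,
      eq_comm]

theorem swapFirstLast_mulVec_general (n : ℕ) (x₁ xₙ : Fin 2 → ℂ)
    (w : Fin (2 ^ (n - 2)) → ℂ) :
    ((Matrix.fromBlocks
          ((1 : Matrix (Fin (2 ^ (n - 2))) (Fin (2 ^ (n - 2))) ℂ) ⊗ₖ P0)
          ((1 : Matrix (Fin (2 ^ (n - 2))) (Fin (2 ^ (n - 2))) ℂ) ⊗ₖ L1)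
          ((1 : Matrix (Fin (2 ^ (n - 2))) (Fin (2 ^ (n - 2))) ℂ) ⊗ₖ L0)
          ((1 : Matrix (Fin (2 ^ (n - 2))) (Fin (2 ^ (n - 2))) ℂ) ⊗ₖ P1)).submatrix
        qSplit qSplit).mulVec (vecKron x₁ (vecKron w xₙ)) =
      vecKron xₙ (vecKron w x₁) := by
  rw [fromBlocks_kron_submatrix_qSplit_eq_permMatrix, permMatrix_mulVec, vecKron_comp_outerSwap]

/-- `S_n := fromBlocks (I_{2^{n-2}} ⊗ P₀) (I_{2^{n-2}} ⊗ L₁) (I_{2^{n-2}} ⊗ L₀) (I_{2^{n-2}} ⊗ P₁)`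
maps `x₁ ⊗ w ⊗ xₙ` to `xₙ ⊗ w ⊗ x₁` : it swaps the first and last qubit of an `n`-qubit state. -/
theorem swapFirstLast_mulVec (n : ℕ) (hn : 2 ≤ n) (x₁ xₙ : Fin 2 → ℂ)
    (w : Fin (2 ^ (n - 2)) → ℂ) :
    ((Matrix.fromBlocks
          ((1 : Matrix (Fin (2 ^ (n - 2))) (Fin (2 ^ (n - 2))) ℂ) ⊗ₖ P0)
          ((1 : Matrix (Fin (2 ^ (n - 2))) (Fin (2 ^ (n - 2))) ℂ) ⊗ₖ L1)
          ((1 : Matrix (Fin (2 ^ (n - 2))) (Fin (2 ^ (n - 2))) ℂ) ⊗ₖ L0)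
          ((1 : Matrix (Fin (2 ^ (n - 2))) (Fin (2 ^ (n - 2))) ℂ) ⊗ₖ P1)).submatrix
        qSplit qSplit).mulVec (vecKron x₁ (vecKron w xₙ)) =
      vecKron xₙ (vecKron w x₁) :=
  swapFirstLast_mulVec_general n x₁ xₙ w
end

section
/- Fix k, m, n with n ≥ 1 and m + n ≤ k, and define SWAP_{(k;m,m+n)} := I_{2^{m-1}} ⊗ S_{n+1} ⊗ I_{2^{k-m-n}}, where S_{n+1} := fromBlocks (I_{2^{n-1}} ⊗ P₀) (I_{2^{n-1}} ⊗ L₁) (I_{2^{n-1}} ⊗ L₀) (I_{2^{n-1}} ⊗ P₁). Then for all a ∈ ℂ^{2^{m-1}}, x, y ∈ ℂ², w ∈ ℂ^{2^{n-1}}, b ∈ ℂ^{2^{k-m-n}}, SWAP_{(k;m,m+n)} applied to a ⊗ x ⊗ w ⊗ y ⊗ b equals a ⊗ y ⊗ w ⊗ x ⊗ b; i.e. it swaps the m-th and (m+n)-th qubits of a k-qubit state. -/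
open Matrix Kronecker

/-- `S_{n+1}`, the swap of the first and last of `n+1` qubits, viewed as a matrix on the
tensor-product index set `Fin 2 × (Fin (2^{n-1}) × Fin 2)`. -/
noncomputable def Ssw (n : ℕ) :
    Matrix (Fin 2 × (Fin (2 ^ (n - 1)) × Fin 2)) (Fin 2 × (Fin (2 ^ (n - 1)) × Fin 2)) ℂ :=
  (Matrix.fromBlocks
      ((1 : Matrix (Fin (2 ^ (n - 1))) (Fin (2 ^ (n - 1))) ℂ) ⊗ₖ P0)
      ((1 : Matrix (Fin (2 ^ (n - 1))) (Fin (2 ^ (n - 1))) ℂ) ⊗ₖ L1)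
      ((1 : Matrix (Fin (2 ^ (n - 1))) (Fin (2 ^ (n - 1))) ℂ) ⊗ₖ L0)
      ((1 : Matrix (Fin (2 ^ (n - 1))) (Fin (2 ^ (n - 1))) ℂ) ⊗ₖ P1)).submatrix qSplit qSplit

lemma kronecker_mulVec_vecKron {α β α' β' : Type*} [Fintype α'] [Fintype β']
    (A : Matrix α α' ℂ) (B : Matrix β β' ℂ) (u : α' → ℂ) (v : β' → ℂ) :
    (A ⊗ₖ B) *ᵥ vecKron u v = vecKron (A *ᵥ u) (B *ᵥ v) := by
  funext ⟨i, j⟩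
  simp only [mulVec, dotProduct, vecKron, kroneckerMap_apply, Fintype.sum_prod_type,
    Fintype.sum_mul_sum]
  exact Finset.sum_congr rfl fun _ _ => Finset.sum_congr rfl fun _ _ => by ring

def swapEnds {α β : Type*} (p : α × β × α) : α × β × α := (p.2.2, p.2.1, p.1)

lemma vecKron_comp_swapEnds {α β : Type*} (x y : α → ℂ) (w : β → ℂ) :
    vecKron x (vecKron w y) ∘ swapEnds = vecKron y (vecKron w x) := by
  funext ⟨i, p, j⟩
  simp only [Function.comp_apply, vecKron, swapEnds]
  ring

lemma Ssw_apply (n : ℕ) (r c : Fin 2 × Fin (2 ^ (n - 1)) × Fin 2) :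
    Ssw n r c = if c = swapEnds r then 1 else 0 := by
  obtain ⟨i, p, j⟩ := r
  obtain ⟨i', p', j'⟩ := c
  fin_cases i <;> fin_cases i' <;> fin_cases j <;> fin_cases j' <;>
    simp [Ssw, qSplit, swapEnds, P0, P1, L0, L1, one_apply, eq_comm]

lemma Ssw_mulVec (n : ℕ) (v : Fin 2 × Fin (2 ^ (n - 1)) × Fin 2 → ℂ) :
    Ssw n *ᵥ v = v ∘ swapEnds := by
  funext r
  simp [mulVec, dotProduct, Ssw_apply]

theorem swap_km_mn_mulVec_general (k m n : ℕ)
    (a : Fin (2 ^ (m - 1)) → ℂ) (x y : Fin 2 → ℂ) (w : Fin (2 ^ (n - 1)) → ℂ)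
    (b : Fin (2 ^ (k - m - n)) → ℂ) :
    (((1 : Matrix (Fin (2 ^ (m - 1))) (Fin (2 ^ (m - 1))) ℂ) ⊗ₖ Ssw n ⊗ₖ
          (1 : Matrix (Fin (2 ^ (k - m - n))) (Fin (2 ^ (k - m - n))) ℂ)).mulVec
        (vecKron (vecKron a (vecKron x (vecKron w y))) b)) =
      vecKron (vecKron a (vecKron y (vecKron w x))) b := by
  rw [kronecker_mulVec_vecKron, kronecker_mulVec_vecKron, Ssw_mulVec, vecKron_comp_swapEnds,
    one_mulVec, one_mulVec]

/-- `SWAP_{(k;m,m+n)} = I_{2^{m-1}} ⊗ S_{n+1} ⊗ I_{2^{k-m-n}}` swaps the `m`-th and the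
`(m+n)`-th qubits of a `k`-qubit state: it maps `a ⊗ x ⊗ w ⊗ y ⊗ b` to `a ⊗ y ⊗ w ⊗ x ⊗ b`. -/
theorem swap_km_mn_mulVec (k m n : ℕ) (hm : 1 ≤ m) (hn : 1 ≤ n) (hk : m + n ≤ k)
    (a : Fin (2 ^ (m - 1)) → ℂ) (x y : Fin 2 → ℂ) (w : Fin (2 ^ (n - 1)) → ℂ)
    (b : Fin (2 ^ (k - m - n)) → ℂ) :
    (((1 : Matrix (Fin (2 ^ (m - 1))) (Fin (2 ^ (m - 1))) ℂ) ⊗ₖ Ssw n ⊗ₖ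
          (1 : Matrix (Fin (2 ^ (k - m - n))) (Fin (2 ^ (k - m - n))) ℂ)).mulVec
        (vecKron (vecKron a (vecKron x (vecKron w y))) b)) =
      vecKron (vecKron a (vecKron y (vecKron w x))) b :=
  swap_km_mn_mulVec_general k m n a x y w b
end
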